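/- (Approximation ratio ε of Algorithm 4.) Let ε > 0, let σ = (a₁, …, a_m) be a stream of elements of a type with decidable equality, and run the Misra–Gries algorithm with capacity k-1 on σ for any integer k with k ≥ 1/ε and k ≥ 2. Then for every element j, the returned estimate satisfies f_j - ε·m ≤ f̂_j ≤ f_j, where f_j is the true number of occurrences of j in σ. -/

import Mathlib

/-- One step of the Misra–Gries algorithm with capacity `k - 1`.  The state is
a finitely supported map `f : α →₀ ℕ` from elements to (positive) counters;
elements with counter `0` are exactly those not present in the map.  On reading
`a`: if `a` has a counter, increment it; else if fewer than `k - 1` elements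
are currently stored, insert `a` with counter `1`; otherwise decrement every
counter by `1` (counters reaching `0` drop out of the support). -/
noncomputable def mgStep {α : Type*} [DecidableEq α] (k : ℕ) (f : α →₀ ℕ) (a : α) :
    α →₀ ℕ :=
  if 0 < f a then f.update a (f a + 1)
  else if f.support.card < k - 1 then f.update a 1
  else f.mapRange (· - 1) (Nat.zero_sub 1)

/-- Running the Misra–Gries algorithm with capacity `k - 1` on the stream `σ`,
starting from the empty map; `mgRun k σ j` is the final estimated count `f̂ⱼ`
of element `j` (`0` if `j` is absent from the final map). -/
noncomputable def mgRun {α : Type*} [DecidableEq α] (k : ℕ) (σ : List α) : α →₀ ℕ :=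
  σ.foldl (mgStep k) 0

/-! A step never raises a counter by more than the element just read contributes, so `f̂ⱼ ≤ fⱼ`.
A decrement step lowers each counter by at most one but discards at least `k` units of mass:
the element read and one unit from each of the at least `k - 1` stored counters. Hence
`k (fⱼ - f̂ⱼ) + (mass still stored) ≤ m` is preserved along the stream, and
`fⱼ - f̂ⱼ ≤ m / k ≤ ε m`. -/

open Finsupp

theorem Finsupp.update_add_eq_add_single {α M : Type*} [DecidableEq α] [AddZeroClass M]
    (f : α →₀ M) (a : α) (b : M) : f.update a (f a + b) = f + single a b := by
  ext j
  rcases eq_or_ne j a with rfl | hj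
  · simp
  · simp [update_apply, hj]

theorem Finsupp.degree_mapRange_pred_add_card {α : Type*} (f : α →₀ ℕ) :
    (f.mapRange (· - 1) (Nat.zero_sub 1)).degree + f.support.card = f.degree := by
  rw [degree_apply, degree_apply, Finset.card_eq_sum_ones,
    Finset.sum_subset support_mapRange (fun i _ hi => by simpa using hi),
    ← Finset.sum_add_distrib]
  refine Finset.sum_congr rfl fun i hi => ?_
  have := Nat.one_le_iff_ne_zero.2 (mem_support_iff.1 hi)
  simp only [mapRange_apply]
  omega

theorem Multiset.degree_toFinsupp {α : Type*} [DecidableEq α] (s : Multiset α) :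
    (toFinsupp s).degree = card s := by
  rw [← toFinsupp_sum_eq]; rfl

theorem Multiset.toFinsupp_cons {α : Type*} [DecidableEq α] (a : α) (s : Multiset α) :
    toFinsupp (a ::ₘ s) = single a 1 + toFinsupp s := by
  rw [← singleton_add, toFinsupp_add, toFinsupp_singleton]

section MisraGries

variable {α : Type*} [DecidableEq α]

theorem mgStep_eq_add_single {k : ℕ} {f : α →₀ ℕ} {a : α}
    (h : 0 < f a ∨ f.support.card < k - 1) : mgStep k f a = f + single a 1 := by
  by_cases hpos : 0 < f a
  · rw [mgStep, if_pos hpos, update_add_eq_add_single]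
  · rw [mgStep, if_neg hpos, if_pos (h.resolve_left hpos), ← update_add_eq_add_single,
      Nat.eq_zero_of_not_pos hpos]

theorem mgStep_eq_mapRange {k : ℕ} {f : α →₀ ℕ} {a : α} (h : f a = 0)
    (hfull : k - 1 ≤ f.support.card) :
    mgStep k f a = f.mapRange (· - 1) (Nat.zero_sub 1) := by
  rw [mgStep, if_neg (by omega), if_neg (by omega)]

theorem mgStep_le (k : ℕ) (f : α →₀ ℕ) (a : α) : mgStep k f a ≤ f + single a 1 := by
  by_cases h : 0 < f a ∨ f.support.card < k - 1
  · rw [mgStep_eq_add_single h]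
  · push Not at h
    rw [mgStep_eq_mapRange (by omega) h.2]
    intro j
    simp only [mapRange_apply, coe_add, Pi.add_apply]
    omega

theorem mgStep_potential (k : ℕ) (f : α →₀ ℕ) (a j : α) :
    k * (f + single a 1 : α →₀ ℕ) j + (mgStep k f a).degree ≤
      (f + single a 1 : α →₀ ℕ).degree + k * mgStep k f a j := by
  by_cases h : 0 < f a ∨ f.support.card < k - 1
  · rw [mgStep_eq_add_single h]; omega
  push Not at h
  have hfa : f a = 0 := by omega
  have hmass := degree_mapRange_pred_add_card f
  rw [mgStep_eq_mapRange hfa h.2, map_add, degree_single]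
  simp only [mapRange_apply, coe_add, Pi.add_apply, single_apply]
  split_ifs with hj
  · rw [← hj, hfa]; omega
  · cases f j with
    | zero => omega
    | succ n => rw [Nat.add_sub_cancel, add_zero, mul_add_one]; omega

theorem foldl_mgStep_le (k : ℕ) (σ : List α) (f : α →₀ ℕ) :
    σ.foldl (mgStep k) f ≤ f + Multiset.toFinsupp σ := by
  induction σ generalizing f with
  | nil => simp
  | cons a σ ih =>
    rw [List.foldl_cons, ← Multiset.cons_coe, Multiset.toFinsupp_cons, ← add_assoc]
    exact (ih _).trans (add_le_add (mgStep_le k f a) le_rfl)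

theorem foldl_mgStep_potential (k : ℕ) (σ : List α) (f : α →₀ ℕ) (j : α) :
    k * (f + Multiset.toFinsupp (σ : Multiset α)) j + (σ.foldl (mgStep k) f).degree ≤
      (f + Multiset.toFinsupp (σ : Multiset α)).degree + k * σ.foldl (mgStep k) f j := by
  induction σ generalizing f with
  | nil => simp [add_comm]
  | cons a σ ih =>
    have hstep := mgStep_potential k f a j
    have hrest := ih (mgStep k f a)
    rw [List.foldl_cons, ← Multiset.cons_coe, Multiset.toFinsupp_cons, ← add_assoc]
    simp only [coe_add, Pi.add_apply, map_add, mul_add] at hstep hrest ⊢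
    omega

theorem mgRun_le_count (k : ℕ) (σ : List α) (j : α) : mgRun k σ j ≤ σ.count j := by
  simpa [mgRun] using foldl_mgStep_le k σ 0 j

theorem mul_count_sub_mgRun_le_length (k : ℕ) (σ : List α) (j : α) :
    k * (σ.count j - mgRun k σ j) ≤ σ.length := by
  have h := foldl_mgStep_potential k σ 0 j
  simp only [zero_add, Multiset.toFinsupp_apply, Multiset.coe_count, Multiset.degree_toFinsupp,
    Multiset.coe_card] at h
  change k * σ.count j + (mgRun k σ).degree ≤ σ.length + k * mgRun k σ j at h
  rw [Nat.mul_sub]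
  omega

end MisraGries

theorem mgRun_eps_approx_general {α : Type*} [DecidableEq α] (ε : ℝ) (hε : 0 < ε)
    (k : ℕ) (hkε : 1 / ε ≤ (k : ℝ)) (σ : List α) (j : α) :
    (σ.count j : ℝ) - ε * (σ.length : ℝ) ≤ (mgRun k σ j : ℝ) ∧
      (mgRun k σ j : ℝ) ≤ (σ.count j : ℝ) := by
  have hle := mgRun_le_count k σ j
  have hgap : (k : ℝ) * ((σ.count j : ℝ) - mgRun k σ j) ≤ σ.length := by
    rw [← Nat.cast_sub hle]
    exact_mod_cast mul_count_sub_mgRun_le_length k σ j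
  have hεk : 1 ≤ ε * k := by rwa [div_le_iff₀ hε, mul_comm] at hkε
  have hle' : (mgRun k σ j : ℝ) ≤ σ.count j := by exact_mod_cast hle
  refine ⟨?_, hle'⟩
  linarith [mul_le_mul_of_nonneg_left hgap hε.le,
    mul_le_mul_of_nonneg_right hεk (sub_nonneg.2 hle')]

/-- Approximation ratio `ε`: if `k ≥ 1 / ε` and `k ≥ 2`, then for every element
`j` the Misra–Gries estimate satisfies `fⱼ - ε * m ≤ f̂ⱼ ≤ fⱼ`, where `fⱼ` is
the true number of occurrences of `j` in the stream `σ` of length `m`. -/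
theorem mgRun_eps_approx {α : Type*} [DecidableEq α] (ε : ℝ) (hε : 0 < ε)
    (k : ℕ) (hk : 2 ≤ k) (hkε : 1 / ε ≤ (k : ℝ)) (σ : List α) (j : α) :
    (σ.count j : ℝ) - ε * (σ.length : ℝ) ≤ (mgRun k σ j : ℝ) ∧
      (mgRun k σ j : ℝ) ≤ (σ.count j : ℝ) :=
  mgRun_eps_approx_general ε hε k hkε σ j
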